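/- arXiv:1710.10258 — 10 statements merged into one kernel-verified Lean document; each statement's English description precedes it below -/
import Mathlib

section
/- Let j₁ and j₂ be modalities. If j₁ is an open modality (j₁(P) = U ⇒ P for some proposition U) or j₂ is a closed modality (j₂(P) = V ∨ P for some proposition V), then the composite j₁ ∘ j₂ is a modality. -/
def Modality (j : Prop → Prop) : Prop :=
  (∀ P : Prop, P → j P) ∧ (∀ P : Prop, j (j P) → j P) ∧
    (∀ P Q : Prop, (P → Q) → j P → j Q)

theorem stmt_6 (j₁ j₂ : Prop → Prop) (hj₁ : Modality j₁) (hj₂ : Modality j₂)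
    (h : (∃ U : Prop, ∀ P : Prop, j₁ P ↔ (U → P)) ∨
         (∃ V : Prop, ∀ P : Prop, j₂ P ↔ (V ∨ P))) :
    Modality (fun P => j₁ (j₂ P)) := by
  obtain ⟨u₁, m₁, f₁⟩ := hj₁
  obtain ⟨u₂, m₂, f₂⟩ := hj₂
  refine ⟨fun P p => u₁ _ (u₂ _ p), ?_, fun P Q f => f₁ _ _ (f₂ _ _ f)⟩
  intro P hh
  rcases h with ⟨U, hU⟩ | ⟨V, hV⟩
  · rw [hU] at hh ⊢
    intro u
    exact m₂ P (f₂ _ _ (fun g => (hU _).mp g u) (hh u))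
  · apply m₁
    refine f₁ _ _ ?_ hh
    intro hv
    rcases (hV _).mp hv with v | hp
    · exact u₁ _ ((hV P).mpr (Or.inl v))
    · exact hp
end

section
/- Let j be a modality. The type Prop_j := {P : Prop | jP ⇒ P} of j-closed propositions is a j-sheaf: it is j-separated, and for every predicate φ : Prop_j → Prop that is j-closed pointwise, if j(∃ x, ∀ x', φ x' ↔ x = x') holds then ∃ x, ∀ x', φ x' ↔ x = x' holds. -/
theorem stmt_7 (j : Prop → Prop)
    (h1 : ∀ P : Prop, P → j P) (h2 : ∀ P : Prop, j (j P) → j P)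
    (h3 : ∀ P Q : Prop, (P → Q) → j P → j Q) :
    (∀ x x' : {P : Prop // j P → P}, j (x = x') → x = x') ∧
    (∀ φ : {P : Prop // j P → P} → Prop, (∀ x, j (φ x) → φ x) →
      j (∃ x, ∀ x', φ x' ↔ x = x') → ∃ x, ∀ x', φ x' ↔ x = x') := by
  have sep : ∀ x x' : {P : Prop // j P → P}, j (x = x') → x = x' := by
    intro x x' hj
    apply Subtype.ext
    apply propext
    constructor
    · intro hx
      exact x'.2 (h3 _ _ (fun (e : x = x') => e ▸ hx) hj)
    · intro hx'
      exact x.2 (h3 _ _ (fun (e : x = x') => e.symm ▸ hx') hj)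
  refine ⟨sep, ?_⟩
  intro φ hφ hj
  set P₀ : Prop := ∀ x : {P : Prop // j P → P}, φ x → x.1 with hP₀
  have hP₀c : j P₀ → P₀ := by
    intro hjP x hx
    exact x.2 (h3 _ _ (fun h => h x hx) hjP)
  set x₀ : {P : Prop // j P → P} := ⟨P₀, hP₀c⟩ with hx₀
  have key : ∀ x : {P : Prop // j P → P}, (∀ x', φ x' ↔ x = x') → x = x₀ := by
    intro x hx
    apply Subtype.ext
    apply propext
    constructor
    · intro h x' hx'
      have : x = x' := (hx x').mp hx'
      exact this ▸ h
    · intro h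
      exact h x ((hx x).mpr rfl)
  have hφx₀ : φ x₀ := by
    apply hφ
    apply h3 _ _ _ hj
    rintro ⟨x, hx⟩
    have := key x hx
    exact this ▸ (hx x).mpr rfl
  refine ⟨x₀, fun x' => ⟨?_, ?_⟩⟩
  · intro hx'
    apply sep
    apply h3 _ _ _ hj
    rintro ⟨x, hx⟩
    have h1' := key x hx
    have h2' := (hx x').mp hx'
    exact h1' ▸ h2'
  · intro h
    exact h ▸ hφx₀
end

section
/- Let j be a modality and let r = (δ, υ) be a j-local Dedekind real (δ, υ : ℚ → Prop satisfying j-closedness, down/up-closure, j-roundedness, j-boundedness, j-disjointness, and j-locatedness). For any n : ℕ and rationals q₀ < q₁ < ⋯ < q_{n+2}, if δ q₀ and υ q_{n+2} hold, then j(∃ k, 0 ≤ k ≤ n ∧ δ q_k ∧ υ q_{k+2}). -/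
structure IsLocalReal (j : Prop → Prop) (δ υ : ℚ → Prop) : Prop where
  closed_d : ∀ q, j (δ q) → δ q
  closed_u : ∀ q, j (υ q) → υ q
  down : ∀ q₁ q₂ : ℚ, q₁ < q₂ → δ q₂ → δ q₁
  up : ∀ q₁ q₂ : ℚ, q₁ < q₂ → υ q₁ → υ q₂
  rounded_d : ∀ q₁, δ q₁ → j (∃ q₂, q₁ < q₂ ∧ δ q₂)
  rounded_u : ∀ q₂, υ q₂ → j (∃ q₁, q₁ < q₂ ∧ υ q₁)
  bounded_d : j (∃ q, δ q)
  bounded_u : j (∃ q, υ q)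
  disjoint : ∀ q, δ q ∧ υ q → j False
  located : ∀ q₁ q₂ : ℚ, q₁ < q₂ → j (δ q₁ ∨ υ q₂)

theorem stmt_12 (j : Prop → Prop) (hj : Modality j)
    (δ υ : ℚ → Prop) (hr : IsLocalReal j δ υ)
    (n : ℕ) (q : ℕ → ℚ) (hq : ∀ i, i < n + 2 → q i < q (i + 1))
    (h₀ : δ (q 0)) (htop : υ (q (n + 2))) :
    j (∃ k : ℕ, k ≤ n ∧ δ (q k) ∧ υ (q (k + 2))) := by
  obtain ⟨pure, join, map⟩ := hj
  induction n with
  | zero => exact pure _ ⟨0, le_refl 0, h₀, htop⟩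
  | succ m ih =>
    have hloc := hr.located (q (m + 1)) (q (m + 2)) (hq (m + 1) (by omega))
    apply join
    refine map _ _ ?_ hloc
    rintro (hd | hu)
    · exact pure _ ⟨m + 1, le_refl _, hd, htop⟩
    · have h := ih (fun i hi => hq i (by omega)) hu
      exact map _ _ (fun ⟨k, hk, h1, h2⟩ => ⟨k, by omega, h1, h2⟩) h
end

section
/- Let j be a modality and r a j-local Dedekind real with cuts (δ, υ). Then r is j-arithmetically located: for every rational p > 0, j(∃ d u : ℚ, δ d ∧ υ u ∧ 0 < u - d ∧ u - d < p). -/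
theorem stmt_13 (j : Prop → Prop) (hj : Modality j)
    (δ υ : ℚ → Prop) (hr : IsLocalReal j δ υ)
    (p : ℚ) (hp : 0 < p) :
    j (∃ d u : ℚ, δ d ∧ υ u ∧ 0 < u - d ∧ u - d < p) := by
  obtain ⟨hpure, hjoin, hmap⟩ := hj
  have bind : ∀ P Q : Prop, j P → (P → j Q) → j Q :=
    fun P Q hP f => hjoin Q (hmap P (j Q) f hP)
  set ε : ℚ := p / 3 with hε
  have hε0 : 0 < ε := by positivity
  have key : ∀ n : ℕ, ∀ d u : ℚ, δ d → υ u → u - d ≤ n * ε →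
      j (∃ d u : ℚ, δ d ∧ υ u ∧ 0 < u - d ∧ u - d < p) := by
    intro n
    induction n with
    | zero =>
      intro d u hd hu hle
      simp only [Nat.cast_zero, zero_mul] at hle
      have : δ u := by
        rcases lt_or_eq_of_le (by linarith : u ≤ d) with h | h
        · exact hr.down u d h hd
        · exact h ▸ hd
      exact hmap False _ (fun h => h.elim) (hr.disjoint u ⟨this, hu⟩)
    | succ n ih =>
      intro d u hd hu hle
      refine bind _ _ (hr.located (d + ε) (d + 2 * ε) (by linarith)) ?_
      rintro (h | h)
      · exact ih (d + ε) u h hu (by push_cast at hle ⊢; linarith)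
      · exact hpure _ ⟨d, d + 2 * ε, hd, h, by constructor <;> linarith⟩
  refine bind _ _ hr.bounded_d ?_
  rintro ⟨d, hd⟩
  refine bind _ _ hr.bounded_u ?_
  rintro ⟨u, hu⟩
  obtain ⟨n, hn⟩ := exists_nat_ge ((u - d) / ε)
  exact key n d u hd hu (by rw [div_le_iff₀ hε0] at hn; linarith)
end

section
/- Let j be a modality and r a j-local Dedekind real with cuts (δ, υ) such that δ 0 holds (r is positive). Then r is j-multiplicatively located: for all rationals p, p' with 0 < p < p', j(∃ d u : ℚ, 0 < d ∧ δ d ∧ υ u ∧ u / d < p' / p). -/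
theorem stmt_14 (j : Prop → Prop) (hj : Modality j)
    (δ υ : ℚ → Prop) (hr : IsLocalReal j δ υ) (hpos : δ 0)
    (p p' : ℚ) (hp : 0 < p) (hpp' : p < p') :
    j (∃ d u : ℚ, 0 < d ∧ δ d ∧ υ u ∧ u / d < p' / p) := by
  obtain ⟨hret, hjoin, hmap⟩ := hj
  have bind : ∀ {A B : Prop}, j A → (A → j B) → j B := by
    intro A B ha f
    exact hjoin B (hmap A (j B) f ha)
  set q : ℚ := p' / p with hq
  have hq1 : 1 < q := (one_lt_div hp).mpr hpp'
  -- choose k with 1 < k and k^2 < q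
  set ε : ℚ := min 1 ((q - 1) / 4) with hε
  have hε0 : 0 < ε := lt_min one_pos (by linarith)
  have hε1 : ε ≤ 1 := min_le_left _ _
  set k : ℚ := 1 + ε with hk
  have hk1 : 1 < k := by simp [hk]; linarith
  have hk0 : 0 < k := by linarith
  have hksq : k ^ 2 < q := by
    have h4 : ε ≤ (q - 1) / 4 := min_le_right _ _
    have hεε : ε * ε ≤ ε := by nlinarith
    have : k ^ 2 = 1 + 2 * ε + ε * ε := by ring
    nlinarith
  refine bind hr.bounded_u ?_
  rintro ⟨u₀, hu₀⟩
  refine bind (hr.rounded_d 0 hpos) ?_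
  rintro ⟨d₀, hd₀pos, hd₀⟩
  -- key induction
  have key : ∀ n : ℕ, j (δ (d₀ * k ^ n) ∨
      ∃ d u : ℚ, 0 < d ∧ δ d ∧ υ u ∧ u / d < p' / p) := by
    intro n
    induction n with
    | zero => exact hret _ (Or.inl (by simpa using hd₀))
    | succ n ih =>
      refine bind ih ?_
      rintro (hδn | hgoal)
      · have hlt : d₀ * k ^ (n + 1) < d₀ * k ^ (n + 2) := by
          have : k ^ (n + 1) < k ^ (n + 2) :=
            pow_lt_pow_right₀ hk1 (by omega)
          nlinarith
        refine bind (hr.located _ _ hlt) ?_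
        rintro (h1 | h2)
        · exact hret _ (Or.inl h1)
        · refine hret _ (Or.inr ⟨d₀ * k ^ n, d₀ * k ^ (n + 2), ?_, hδn, h2, ?_⟩)
          · positivity
          · have hne : d₀ * k ^ n ≠ 0 := by positivity
            have : d₀ * k ^ (n + 2) / (d₀ * k ^ n) = k ^ 2 := by
              field_simp
              ring
            rw [this, ← hq]
            exact hksq
      · exact hret _ (Or.inr hgoal)
  -- archimedean: find N with d₀ * k ^ N > u₀
  obtain ⟨N, hN⟩ := exists_nat_gt ((u₀ - d₀) / (d₀ * ε))
  have hbig : u₀ < d₀ * k ^ N := by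
    have hb : 1 + (N : ℚ) * ε ≤ k ^ N := by
      have := one_add_mul_le_pow (a := ε) (by linarith) N
      linarith [this]
    have hNε : u₀ - d₀ < d₀ * ε * N := by
      have hde : 0 < d₀ * ε := by positivity
      calc u₀ - d₀ = (u₀ - d₀) / (d₀ * ε) * (d₀ * ε) := by field_simp
        _ < N * (d₀ * ε) := by
            exact mul_lt_mul_of_pos_right hN hde
        _ = d₀ * ε * N := by ring
    nlinarith
  refine bind (key N) ?_
  rintro (hδN | hgoal)
  · have hυN : υ (d₀ * k ^ N) := hr.up _ _ hbig hu₀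
    exact hmap False _ False.elim (hr.disjoint _ ⟨hδN, hυN⟩)
  · exact hret _ hgoal
end

section
/- Let j be a modality and let (δ₁, υ₁), (δ₂, υ₂) be two j-local Dedekind reals. Define their sum (δ', υ') by δ' q ↔ j(∃ q₁ q₂, δ₁ q₁ ∧ δ₂ q₂ ∧ q < q₁ + q₂) and υ' q ↔ j(∃ q₁ q₂, υ₁ q₁ ∧ υ₂ q₂ ∧ q₁ + q₂ < q). Then (δ', υ') is again a j-local Dedekind real; in particular it is j-located: for all rationals d < u, j(δ' d ∨ υ' u). -/
namespace Stmt15Aux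

variable {j : Prop → Prop}

theorem jbind (hj : Modality j) {P Q : Prop} (hp : j P) (f : P → j Q) : j Q :=
  hj.2.1 Q (hj.2.2 P (j Q) f hp)

/-- Chain lemma: climb by steps of size `s`. -/
theorem chain (hj : Modality j) {δ υ : ℚ → Prop} (h : IsLocalReal j δ υ)
    {s : ℚ} (hs : 0 < s) :
    ∀ n : ℕ, ∀ a : ℚ, δ a → υ (a + n * s + s) → j (∃ d, δ d ∧ υ (d + 2 * s)) := by
  intro n
  induction n with
  | zero =>
    intro a ha hu
    refine hj.1 _ ⟨a, ha, h.up (a + s) (a + 2 * s) (by linarith) (by simpa using hu)⟩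
  | succ n ih =>
    intro a ha hu
    refine jbind hj (h.located (a + s) (a + 2 * s) (by linarith)) ?_
    rintro (hd | hu2)
    · refine ih (a + s) hd ?_
      have : a + s + n * s + s = a + (n + 1 : ℕ) * s + s := by push_cast; ring
      rw [this]; exact hu
    · exact hj.1 _ ⟨a, ha, hu2⟩

/-- Arithmetic locatedness. -/
theorem arith (hj : Modality j) {δ υ : ℚ → Prop} (h : IsLocalReal j δ υ)
    {ε : ℚ} (hε : 0 < ε) :
    j (∃ d u, δ d ∧ υ u ∧ u - d < ε) := by
  refine jbind hj h.bounded_d ?_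
  rintro ⟨a, ha⟩
  refine jbind hj h.bounded_u ?_
  rintro ⟨b, hb⟩
  set s := ε / 3 with hsdef
  have hs : 0 < s := by positivity
  obtain ⟨n, hn⟩ := exists_nat_gt ((b - a) / s)
  have hnb : b < a + n * s + s := by
    have := (div_lt_iff₀ hs).mp hn
    linarith
  have hu : υ (a + n * s + s) := h.up _ _ hnb hb
  refine jbind hj (chain hj h hs n a ha hu) ?_
  rintro ⟨d, hd, hu2⟩
  exact hj.1 _ ⟨d, d + 2 * s, hd, hu2, by rw [hsdef]; linarith⟩

end Stmt15Aux

open Stmt15Aux in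
theorem stmt_15 (j : Prop → Prop) (hj : Modality j)
    (δ₁ υ₁ δ₂ υ₂ : ℚ → Prop)
    (h₁ : IsLocalReal j δ₁ υ₁) (h₂ : IsLocalReal j δ₂ υ₂) :
    IsLocalReal j
      (fun q => j (∃ q₁ q₂ : ℚ, δ₁ q₁ ∧ δ₂ q₂ ∧ q < q₁ + q₂))
      (fun q => j (∃ q₁ q₂ : ℚ, υ₁ q₁ ∧ υ₂ q₂ ∧ q₁ + q₂ < q)) := by
  obtain ⟨unit, mult, mono⟩ := id hj
  constructor
  · intro q hq; exact mult _ hq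
  · intro q hq; exact mult _ hq
  · intro q₁ q₂ hlt hq
    refine mono _ _ ?_ hq
    rintro ⟨a, b, ha, hb, h⟩
    exact ⟨a, b, ha, hb, by linarith⟩
  · intro q₁ q₂ hlt hq
    refine mono _ _ ?_ hq
    rintro ⟨a, b, ha, hb, h⟩
    exact ⟨a, b, ha, hb, by linarith⟩
  · intro q hq
    refine jbind hj hq ?_
    rintro ⟨a, b, ha, hb, h⟩
    refine unit _ ⟨(q + (a + b)) / 2, by linarith, unit _ ⟨a, b, ha, hb, by linarith⟩⟩
  · intro q hq
    refine jbind hj hq ?_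
    rintro ⟨a, b, ha, hb, h⟩
    refine unit _ ⟨(q + (a + b)) / 2, by linarith, unit _ ⟨a, b, ha, hb, by linarith⟩⟩
  · refine jbind hj h₁.bounded_d ?_
    rintro ⟨a, ha⟩
    refine jbind hj h₂.bounded_d ?_
    rintro ⟨b, hb⟩
    exact unit _ ⟨a + b - 1, unit _ ⟨a, b, ha, hb, by linarith⟩⟩
  · refine jbind hj h₁.bounded_u ?_
    rintro ⟨a, ha⟩
    refine jbind hj h₂.bounded_u ?_
    rintro ⟨b, hb⟩
    exact unit _ ⟨a + b + 1, unit _ ⟨a, b, ha, hb, by linarith⟩⟩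
  · rintro q ⟨hd, hu⟩
    refine jbind hj hd ?_
    rintro ⟨a, b, ha, hb, hab⟩
    refine jbind hj hu ?_
    rintro ⟨c, d, hc, hd', hcd⟩
    rcases lt_or_ge c a with h | h
    · exact h₁.disjoint a ⟨ha, h₁.up c a h hc⟩
    · have : d < b := by linarith
      exact h₂.disjoint b ⟨hb, h₂.up d b this hd'⟩
  · intro q₁ q₂ hlt
    have hε : 0 < (q₂ - q₁) / 2 := by linarith
    refine jbind hj (arith hj h₁ hε) ?_
    rintro ⟨d₁, u₁, hd₁, hu₁, hlt₁⟩
    refine jbind hj (arith hj h₂ hε) ?_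
    rintro ⟨d₂, u₂, hd₂, hu₂, hlt₂⟩
    rcases lt_or_ge q₁ (d₁ + d₂) with h | h
    · exact unit _ (Or.inl (unit _ ⟨d₁, d₂, hd₁, hd₂, h⟩))
    · refine unit _ (Or.inr (unit _ ⟨u₁, u₂, hu₁, hu₂, by linarith⟩))
end

section
/- Let j be a modality and let (δ₁, υ₁) be a j-local Dedekind real. Define (δ₂, υ₂) by δ₂ q := υ₁(-q) and υ₂ q := δ₁(-q). Then (δ₂, υ₂) is a j-local Dedekind real, and the sum (δ₁, υ₁) + (δ₂, υ₂) (with addition defined by δ' q ↔ j ∃ q₁ q₂, δ₁ q₁ ∧ δ₂ q₂ ∧ q < q₁ + q₂, and dually for υ') equals the j-local real represented by 0, i.e., δ' q ↔ j(q < 0) and υ' q ↔ j(0 < q). -/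
section Aux

variable {j : Prop → Prop}

lemma modality_bind (hj : Modality j) {P Q : Prop} (h : j P) (f : P → j Q) : j Q :=
  hj.2.1 Q (hj.2.2 P (j Q) f h)

lemma modality_ret (hj : Modality j) {P : Prop} (h : P) : j P := hj.1 P h

lemma modality_false (hj : Modality j) {P : Prop} (h : j False) : j P :=
  hj.2.2 False P False.elim h

/-- Key lemma: for any ε > 0 there is (modally) a pair of cut points at distance ε. -/
lemma cross_lemma (hj : Modality j) {δ υ : ℚ → Prop} (h : IsLocalReal j δ υ) {ε : ℚ} (hε : 0 < ε) :
    j (∃ r, δ r ∧ υ (r + ε)) := by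
  have hε2 : 0 < ε / 2 := by positivity
  refine modality_bind hj h.bounded_d (fun ⟨a, ha⟩ => ?_)
  refine modality_bind hj h.bounded_u (fun ⟨b, hb⟩ => ?_)
  -- sweep from a upward in steps of ε/2
  have step : ∀ n : ℕ, j (δ (a + n * (ε / 2)) ∨ ∃ r, δ r ∧ υ (r + ε)) := by
    intro n
    induction n with
    | zero => exact modality_ret hj (Or.inl (by simpa using ha))
    | succ n ih =>
      refine modality_bind hj ih (fun hc => ?_)
      rcases hc with hd | hC
      · have hlt : a + (n + 1 : ℕ) * (ε / 2) < a + ((n : ℚ) + 2) * (ε / 2) := by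
          push_cast; nlinarith
        refine modality_bind hj (h.located _ _ hlt) (fun hl => ?_)
        rcases hl with hd' | hu'
        · exact modality_ret hj (Or.inl hd')
        · refine modality_ret hj (Or.inr ⟨a + n * (ε / 2), hd, ?_⟩)
          have : a + n * (ε / 2) + ε = a + ((n : ℚ) + 2) * (ε / 2) := by ring
          rwa [this]
      · exact modality_ret hj (Or.inr hC)
  obtain ⟨n, hn⟩ := exists_nat_gt ((b - a) / (ε / 2))
  have hbn : b < a + n * (ε / 2) := by
    have := (div_lt_iff₀ hε2).mp hn
    linarith
  refine modality_bind hj (step n) (fun hc => ?_)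
  rcases hc with hd | hC
  · exact modality_false hj (h.disjoint _ ⟨hd, h.up _ _ hbn hb⟩)
  · exact modality_ret hj hC

end Aux

theorem stmt_16 (j : Prop → Prop) (hj : Modality j)
    (δ₁ υ₁ : ℚ → Prop) (h₁ : IsLocalReal j δ₁ υ₁) :
    IsLocalReal j (fun q => υ₁ (-q)) (fun q => δ₁ (-q)) ∧
    (∀ q : ℚ,
      (j (∃ q₁ q₂ : ℚ, δ₁ q₁ ∧ υ₁ (-q₂) ∧ q < q₁ + q₂) ↔ j (q < 0)) ∧
      (j (∃ q₁ q₂ : ℚ, υ₁ q₁ ∧ δ₁ (-q₂) ∧ q₁ + q₂ < q) ↔ j (0 < q))) := by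
  constructor
  · exact {
      closed_d := fun q h => h₁.closed_u _ h
      closed_u := fun q h => h₁.closed_d _ h
      down := fun q₁ q₂ hlt h => h₁.up _ _ (by linarith) h
      up := fun q₁ q₂ hlt h => h₁.down _ _ (by linarith) h
      rounded_d := fun q h =>
        hj.2.2 _ _ (fun ⟨r, hr, hur⟩ => ⟨-r, by linarith, by simpa using hur⟩)
          (h₁.rounded_u _ h)
      rounded_u := fun q h =>
        hj.2.2 _ _ (fun ⟨r, hr, hdr⟩ => ⟨-r, by linarith, by simpa using hdr⟩)
          (h₁.rounded_d _ h)
      bounded_d := hj.2.2 _ _ (fun ⟨r, hr⟩ => ⟨-r, by simpa using hr⟩) h₁.bounded_u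
      bounded_u := hj.2.2 _ _ (fun ⟨r, hr⟩ => ⟨-r, by simpa using hr⟩) h₁.bounded_d
      disjoint := fun q ⟨hd, hu⟩ => h₁.disjoint (-q) ⟨hu, hd⟩
      located := fun q₁ q₂ hlt =>
        hj.2.2 _ _ Or.symm (h₁.located (-q₂) (-q₁) (by linarith)) }
  · intro q
    constructor
    · constructor
      · refine fun h => modality_bind hj h (fun ⟨q₁, q₂, hd, hu, hlt⟩ => ?_)
        rcases lt_or_ge q₁ (-q₂) with hc | hc
        · exact modality_ret hj (by linarith)
        · have : υ₁ q₁ := by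
            rcases lt_or_eq_of_le hc with hc | hc
            · exact h₁.up _ _ hc hu
            · rwa [hc] at hu
          exact modality_false hj (h₁.disjoint _ ⟨hd, this⟩)
      · refine fun h => modality_bind hj h (fun hq => ?_)
        have hε : 0 < -q / 2 := by linarith
        refine modality_bind hj (cross_lemma hj h₁ hε) (fun ⟨r, hd, hu⟩ => ?_)
        refine modality_ret hj ⟨r, -(r + -q / 2), hd, by simpa using hu, by linarith⟩
    · constructor
      · refine fun h => modality_bind hj h (fun ⟨q₁, q₂, hu, hd, hlt⟩ => ?_)
        rcases lt_or_ge (-q₂) q₁ with hc | hc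
        · exact modality_ret hj (by linarith)
        · have : δ₁ q₁ := by
            rcases lt_or_eq_of_le hc with hc | hc
            · exact h₁.down _ _ hc hd
            · rwa [← hc] at hd
          exact modality_false hj (h₁.disjoint _ ⟨this, hu⟩)
      · refine fun h => modality_bind hj h (fun hq => ?_)
        have hε : 0 < q / 2 := by linarith
        refine modality_bind hj (cross_lemma hj h₁ hε) (fun ⟨r, hd, hu⟩ => ?_)
        refine modality_ret hj ⟨r + q / 2, -r, hu, by simpa using hd, by linarith⟩
end

section
/- Let j be a modality and a = (δ_a, υ_a), b = (δ_b, υ_b) be j-local Dedekind reals. Define b <_j a as j(∃ q : ℚ, υ_b q ∧ δ_a q). Then the following are equivalent: (1) (b <_j a) → j False; (2) ∀ q : ℚ, δ_a q → δ_b q; (3) ∀ q : ℚ, υ_b q → υ_a q. -/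
theorem stmt_17 (j : Prop → Prop) (hj : Modality j)
    (δa υa δb υb : ℚ → Prop)
    (ha : IsLocalReal j δa υa) (hb : IsLocalReal j δb υb) :
    ((j (∃ q : ℚ, υb q ∧ δa q) → j False) ↔ (∀ q : ℚ, δa q → δb q)) ∧
    ((j (∃ q : ℚ, υb q ∧ δa q) → j False) ↔ (∀ q : ℚ, υb q → υa q)) := by
  obtain ⟨hret, hjoin, hmap⟩ := hj
  have bind : ∀ P Q : Prop, j P → (P → j Q) → j Q := fun P Q hp f =>
    hjoin Q (hmap P (j Q) f hp)
  have one_to_two : (j (∃ q : ℚ, υb q ∧ δa q) → j False) → ∀ q : ℚ, δa q → δb q := by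
    intro h1 q hq
    apply hb.closed_d
    refine bind _ _ (ha.rounded_d q hq) ?_
    rintro ⟨q₂, hlt, hq₂⟩
    refine bind _ _ (hb.located q q₂ hlt) ?_
    rintro (h | h)
    · exact hret _ h
    · exact hmap _ _ False.elim (h1 (hret _ ⟨q₂, h, hq₂⟩))
  have two_to_one : (∀ q : ℚ, δa q → δb q) → (j (∃ q : ℚ, υb q ∧ δa q) → j False) := by
    intro h2 h
    refine bind _ _ h ?_
    rintro ⟨q, hu, hd⟩
    exact hb.disjoint q ⟨h2 q hd, hu⟩
  have one_to_three : (j (∃ q : ℚ, υb q ∧ δa q) → j False) → ∀ q : ℚ, υb q → υa q := by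
    intro h1 q hq
    apply ha.closed_u
    refine bind _ _ (hb.rounded_u q hq) ?_
    rintro ⟨q₁, hlt, hq₁⟩
    refine bind _ _ (ha.located q₁ q hlt) ?_
    rintro (h | h)
    · exact hmap _ _ False.elim (h1 (hret _ ⟨q₁, hq₁, h⟩))
    · exact hret _ h
  have three_to_one : (∀ q : ℚ, υb q → υa q) → (j (∃ q : ℚ, υb q ∧ δa q) → j False) := by
    intro h3 h
    refine bind _ _ h ?_
    rintro ⟨q, hu, hd⟩
    exact ha.disjoint q ⟨hd, h3 q hu⟩
  exact ⟨⟨one_to_two, two_to_one⟩, ⟨one_to_three, three_to_one⟩⟩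
end

section
/- Let j be a modality and let x = (δ_x, υ_x) and y = (δ_y, υ_y) be pairs of j-closed, down/up-closed, j-rounded, j-bounded cut predicates on ℚ (j-improper intervals) with x ⊑ y, meaning ∀ q, δ_x q → δ_y q and ∀ q, υ_x q → υ_y q. If x is j-located (∀ q₁ < q₂, j(δ_x q₁ ∨ υ_x q₂)) and y is j-disjoint (∀ q, δ_y q ∧ υ_y q → j False), then x = y, i.e., δ_x q ↔ δ_y q and υ_x q ↔ υ_y q for all q. -/
structure IsImproperInterval (j : Prop → Prop) (δ υ : ℚ → Prop) : Prop where
  closed_d : ∀ q, j (δ q) → δ q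
  closed_u : ∀ q, j (υ q) → υ q
  down : ∀ q₁ q₂ : ℚ, q₁ < q₂ → δ q₂ → δ q₁
  up : ∀ q₁ q₂ : ℚ, q₁ < q₂ → υ q₁ → υ q₂
  rounded_d : ∀ q₁, δ q₁ → j (∃ q₂, q₁ < q₂ ∧ δ q₂)
  rounded_u : ∀ q₂, υ q₂ → j (∃ q₁, q₁ < q₂ ∧ υ q₁)
  bounded_d : j (∃ q, δ q)
  bounded_u : j (∃ q, υ q)

theorem stmt_18 (j : Prop → Prop) (hj : Modality j)
    (δx υx δy υy : ℚ → Prop)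
    (hx : IsImproperInterval j δx υx) (hy : IsImproperInterval j δy υy)
    (hsub_d : ∀ q, δx q → δy q) (hsub_u : ∀ q, υx q → υy q)
    (hloc : ∀ q₁ q₂ : ℚ, q₁ < q₂ → j (δx q₁ ∨ υx q₂))
    (hdisj : ∀ q, δy q ∧ υy q → j False) :
    ∀ q : ℚ, (δx q ↔ δy q) ∧ (υx q ↔ υy q) := by
  obtain ⟨jret, jjoin, jmap⟩ := hj
  have jbind : ∀ P Q : Prop, (P → j Q) → j P → j Q := fun P Q f hp =>
    jjoin Q (jmap P (j Q) f hp)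
  intro q
  constructor
  · constructor
    · exact hsub_d q
    · intro hdy
      apply hx.closed_d
      apply jbind _ _ _ (hy.rounded_d q hdy)
      rintro ⟨q₂, hlt, hdy2⟩
      apply jbind _ _ _ (hloc q q₂ hlt)
      rintro (h | h)
      · exact jret _ h
      · exact jmap False _ False.elim (hdisj q₂ ⟨hdy2, hsub_u q₂ h⟩)
  · constructor
    · exact hsub_u q
    · intro huy
      apply hx.closed_u
      apply jbind _ _ _ (hy.rounded_u q huy)
      rintro ⟨q₁, hlt, huy1⟩
      apply jbind _ _ _ (hloc q₁ q hlt)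
      rintro (h | h)
      · exact jmap False _ False.elim (hdisj q₁ ⟨hsub_d q₁ h, huy1⟩)
      · exact jret _ h
end

section
/- Let j be a modality and x₁ = (δ₁, υ₁), x₂ = (δ₂, υ₂) be j-improper intervals. Define max_j(x₁, x₂) = (δ', υ') by δ' q ↔ j(∃ q₁ q₂, δ₁ q₁ ∧ δ₂ q₂ ∧ q < max q₁ q₂) and υ' q ↔ j(∃ q₁ q₂, υ₁ q₁ ∧ υ₂ q₂ ∧ max q₁ q₂ < q). Then for all q : ℚ, δ' q ↔ j(δ₁ q ∨ δ₂ q) and υ' q ↔ υ₁ q ∧ υ₂ q. -/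
theorem stmt_19 (j : Prop → Prop) (hj : Modality j)
    (δ₁ υ₁ δ₂ υ₂ : ℚ → Prop)
    (h₁ : IsImproperInterval j δ₁ υ₁) (h₂ : IsImproperInterval j δ₂ υ₂) :
    ∀ q : ℚ,
      (j (∃ q₁ q₂ : ℚ, δ₁ q₁ ∧ δ₂ q₂ ∧ q < max q₁ q₂) ↔ j (δ₁ q ∨ δ₂ q)) ∧
      (j (∃ q₁ q₂ : ℚ, υ₁ q₁ ∧ υ₂ q₂ ∧ max q₁ q₂ < q) ↔ υ₁ q ∧ υ₂ q) := by
  obtain ⟨hret, hjoin, hmap⟩ := hj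
  have hand : ∀ P Q : Prop, j P → j Q → j (P ∧ Q) := fun P Q hp hq =>
    hjoin _ (hmap _ _ (fun p => hmap _ _ (fun q => ⟨p, q⟩) hq) hp)
  intro q
  constructor
  · constructor
    · intro h
      refine hmap _ _ ?_ h
      rintro ⟨q₁, q₂, hd₁, hd₂, hlt⟩
      rcases lt_max_iff.mp hlt with h' | h'
      · exact Or.inl (h₁.down q q₁ h' hd₁)
      · exact Or.inr (h₂.down q q₂ h' hd₂)
    · intro h
      refine hjoin _ (hmap _ _ ?_ h)
      rintro (hd | hd)
      · refine hmap _ _ ?_ (hand _ _ (h₁.rounded_d q hd) h₂.bounded_d)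
        rintro ⟨⟨q', hq', hd'⟩, r, hr⟩
        exact ⟨q', r, hd', hr, lt_max_of_lt_left hq'⟩
      · refine hmap _ _ ?_ (hand _ _ (h₂.rounded_d q hd) h₁.bounded_d)
        rintro ⟨⟨q', hq', hd'⟩, r, hr⟩
        exact ⟨r, q', hr, hd', lt_max_of_lt_right hq'⟩
  · constructor
    · intro h
      constructor
      · refine h₁.closed_u q (hmap _ _ ?_ h)
        rintro ⟨q₁, q₂, hu₁, _, hlt⟩
        exact h₁.up q₁ q (lt_of_le_of_lt (le_max_left _ _) hlt) hu₁
      · refine h₂.closed_u q (hmap _ _ ?_ h)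
        rintro ⟨q₁, q₂, _, hu₂, hlt⟩
        exact h₂.up q₂ q (lt_of_le_of_lt (le_max_right _ _) hlt) hu₂
    · rintro ⟨hu₁, hu₂⟩
      refine hmap _ _ ?_ (hand _ _ (h₁.rounded_u q hu₁) (h₂.rounded_u q hu₂))
      rintro ⟨⟨q₁, hq₁, hu₁'⟩, q₂, hq₂, hu₂'⟩
      exact ⟨q₁, q₂, hu₁', hu₂', max_lt hq₁ hq₂⟩
end
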